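/- arXiv:1812.00038 — 2 statements merged into one kernel-verified Lean document; each statement's English description precedes it below -/
import Mathlib

section
/- Let η and ν be two fundamental symmetries on a Krein space K. Then there exists a bounded Krein-unitary operator U with bounded inverse, positive definite with respect to ⟨·,·⟩_η, such that ν = U^× η U. (Concretely, U is the positive square root of the bounded positive operator H = ην with respect to the η-inner product.) -/
/-!
The η-inner product `⟪x, y⟫ = B x (η y)` makes `K` a Hilbert space in which `η` is a self-adjoint
involution and `H = η ν` is a positive operator with `(η H)² = 1`, so `H` is invertible with
`H⁻¹ = η H η`. Take `U = √H`. Then `η U η` is a positive square root of `η H η = H⁻¹`, hence equals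
`U⁻¹` by uniqueness of positive square roots; this is the Krein isometry property `U η U = η`,
and `U² = H` is `ν = U^× η U`.
-/

open scoped InnerProductSpace

section Involution

variable {M₀ : Type*} [MonoidWithZero M₀] {e h : M₀}

-- `h = e * (e * h)` is a product of two involutions, with inverse `e * h * e`.
def Units.ofMulSelfEqOne (he : e * e = 1) (heh : e * h * (e * h) = 1) : M₀ˣ where
  val := h
  inv := e * h * e
  val_inv := by
    calc h * (e * h * e) = e * (e * h * (e * h)) * e := by simp only [← mul_assoc, he, one_mul]
      _ = 1 := by rw [heh, mul_one, he]
  inv_val := by rw [mul_assoc, heh]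

end Involution

namespace CFC

variable {A : Type*} [PartialOrder A] [Ring A] [StarRing A] [TopologicalSpace A]
  [StarOrderedRing A] [Algebra ℝ A] [ContinuousFunctionalCalculus ℝ A IsSelfAdjoint]
  [NonnegSpectrumClass ℝ A] [IsSemitopologicalRing A] [T2Space A] {e h : A}

theorem isStrictlyPositive_sqrt_of_mul_self_eq_one (he : e * e = 1) (hh : 0 ≤ h)
    (heh : e * h * (e * h) = 1) : IsStrictlyPositive (sqrt h) :=
  IsStrictlyPositive.sqrt h ((Units.ofMulSelfEqOne he heh).isUnit.isStrictlyPositive hh)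

theorem sqrt_mul_mul_sqrt_eq_of_mul_self_eq_one (he : IsSelfAdjoint e) (he2 : e * e = 1)
    (hh : 0 ≤ h) (heh : e * h * (e * h) = 1) : sqrt h * e * sqrt h = e := by
  have hinv : Ring.inverse h = e * h * e := Ring.inverse_unit (Units.ofMulSelfEqOne he2 heh)
  have hconj : sqrt (e * h * e) = e * sqrt h * e := by
    refine sqrt_unique ?_ (he.conjugate_nonneg (sqrt_nonneg h))
    calc e * sqrt h * e * (e * sqrt h * e) = e * (sqrt h * (e * e) * sqrt h) * e := by
          simp only [mul_assoc]
      _ = e * h * e := by rw [he2, mul_one, sqrt_mul_sqrt_self h hh]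
  have hunit : IsUnit (sqrt h) := (isStrictlyPositive_sqrt_of_mul_self_eq_one he2 hh heh).isUnit
  calc sqrt h * e * sqrt h = sqrt h * (e * sqrt h * e) * e := by simp only [mul_assoc, he2, mul_one]
    _ = e := by rw [← hconj, ← hinv, sqrt_ringInverse, Ring.mul_inverse_cancel _ hunit, one_mul]

end CFC

theorem completeSpace_of_norm_cauchy_tendsto {E : Type*} [NormedAddCommGroup E]
    (h : ∀ f : ℕ → E, (∀ ε : ℝ, 0 < ε → ∃ M : ℕ, ∀ m ≥ M, ∀ n ≥ M, ‖f m - f n‖ < ε) →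
      ∃ x : E, ∀ ε : ℝ, 0 < ε → ∃ M : ℕ, ∀ n ≥ M, ‖f n - x‖ < ε) :
    CompleteSpace E := by
  refine Metric.complete_of_cauchySeq_tendsto fun f hf => ?_
  rw [Metric.cauchySeq_iff] at hf
  simp only [dist_eq_norm] at hf
  obtain ⟨x, hx⟩ := h f hf
  exact ⟨x, NormedAddCommGroup.tendsto_atTop.mpr hx⟩

namespace ContinuousLinearMap

variable {𝕜 E : Type*} [RCLike 𝕜] [NormedAddCommGroup E]

theorem norm_le_norm_ringInverse_mul_norm_apply [NormedSpace 𝕜 E] {T : E →L[𝕜] E}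
    (hT : IsUnit T) (x : E) : ‖x‖ ≤ ‖Ring.inverse T‖ * ‖T x‖ := by
  calc ‖x‖ = ‖(Ring.inverse T * T) x‖ := by rw [Ring.inverse_mul_cancel _ hT]; rfl
    _ ≤ ‖Ring.inverse T‖ * ‖T x‖ := le_opNorm (Ring.inverse T) (T x)

variable [InnerProductSpace ℂ E] [CompleteSpace E]

theorem re_inner_apply_pos_of_isStrictlyPositive {T : E →L[ℂ] E} (hT : IsStrictlyPositive T)
    {x : E} (hx : x ≠ 0) : 0 < (⟪x, T x⟫_ℂ).re := by
  have hS := hT.sqrt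
  have hSx : CFC.sqrt T x ≠ 0 :=
    (map_ne_zero_iff _ (isUnit_iff_bijective.mp hS.isUnit).injective).mpr hx
  have hT_eq : ⟪CFC.sqrt T x, CFC.sqrt T x⟫_ℂ = ⟪x, T x⟫_ℂ := by
    conv_rhs => rw [← CFC.sqrt_mul_sqrt_self T hT.nonneg]
    exact hS.isSelfAdjoint.isSymmetric _ _
  rw [← hT_eq, ← RCLike.re_to_complex, inner_self_eq_norm_sq]
  exact pow_pos (norm_pos_iff.mpr hSx) 2

end ContinuousLinearMap

section FundamentalSymmetry

variable {E : Type*} [NormedAddCommGroup E] [InnerProductSpace ℂ E] [CompleteSpace E]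

theorem exists_isStrictlyPositive_kreinIsometry_mul_self_eq_comp (η ν : E →ₗ[ℂ] E) (hη : η.IsSymmetric)
    (hη2 : ∀ x, η (η x) = x) (hν2 : ∀ x, ν (ν x) = x)
    (hνsa : ∀ x y, ⟪ν x, η y⟫_ℂ = ⟪x, η (ν y)⟫_ℂ) (hνpos : ∀ x, 0 ≤ (⟪x, η (ν x)⟫_ℂ).re) :
    ∃ U : E →L[ℂ] E, IsStrictlyPositive U ∧ (∀ x, U (U x) = η (ν x)) ∧
      ∀ x, U (η (U x)) = η x := by
  let J : E →L[ℂ] E := ⟨η, hη.continuous⟩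
  have hHsymm : (η ∘ₗ ν).IsSymmetric := fun x y => by
    change ⟪η (ν x), y⟫_ℂ = ⟪x, η (ν y)⟫_ℂ
    rw [hη, hνsa]
  let H : E →L[ℂ] E := ⟨η ∘ₗ ν, hHsymm.continuous⟩
  have hJ : IsSelfAdjoint J := ContinuousLinearMap.isSelfAdjoint_iff_isSymmetric.mpr hη
  have hJ2 : J * J = 1 := ContinuousLinearMap.ext hη2
  have hH : 0 ≤ H := by
    refine (ContinuousLinearMap.nonneg_iff_isPositive H).mpr ⟨hHsymm, fun x => ?_⟩
    change 0 ≤ (⟪(η ∘ₗ ν) x, x⟫_ℂ).re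
    rw [hHsymm x x]
    exact hνpos x
  have hJH : J * H * (J * H) = 1 := ContinuousLinearMap.ext fun x => by
    change η (η (ν (η (η (ν x))))) = x
    rw [hη2, hη2, hν2]
  refine ⟨CFC.sqrt H, CFC.isStrictlyPositive_sqrt_of_mul_self_eq_one hJ2 hH hJH,
    fun x => congr($(CFC.sqrt_mul_sqrt_self H hH) x),
    fun x => congr($(CFC.sqrt_mul_mul_sqrt_eq_of_mul_self_eq_one hJ hJ2 hH hJH) x)⟩

end FundamentalSymmetry

abbrev innerProductCoreOfFundamentalSymmetry {K : Type*} [AddCommGroup K] [Module ℂ K]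
    (B : K →ₗ⋆[ℂ] K →ₗ[ℂ] ℂ) (hherm : ∀ x y : K, starRingEnd ℂ (B y x) = B x y)
    (η : K →ₗ[ℂ] K) (hηsa : ∀ x y : K, B (η x) y = B x (η y))
    (hηpos : ∀ x : K, x ≠ 0 → 0 < (B x (η x)).re) : InnerProductSpace.Core ℂ K where
  inner x y := B x (η y)
  conj_inner_symm x y := by simp only [hherm, hηsa]
  re_inner_nonneg x := by
    rcases eq_or_ne x 0 with rfl | hx
    · simp
    · exact (hηpos x hx).le
  add_left x y z := by simp only [map_add, LinearMap.add_apply]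
  smul_left x y r := by simp only [map_smulₛₗ, LinearMap.smul_apply, smul_eq_mul]
  definite x hx := by
    by_contra hx0
    simpa [hx] using hηpos x hx0

theorem fundamental_symmetries_krein_unitarily_equivalent_general
    {K : Type*} [AddCommGroup K] [Module ℂ K]
    (B : K →ₗ⋆[ℂ] K →ₗ[ℂ] ℂ)
    (hherm : ∀ x y : K, starRingEnd ℂ (B y x) = B x y)
    (η ν : K →ₗ[ℂ] K)
    (hη2 : ∀ x, η (η x) = x) (hν2 : ∀ x, ν (ν x) = x)
    (hηsa : ∀ x y : K, B (η x) y = B x (η y))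
    (hνsa : ∀ x y : K, B (ν x) y = B x (ν y))
    (hηpos : ∀ x : K, x ≠ 0 → 0 < (B x (η x)).re)
    (hνpos : ∀ x : K, x ≠ 0 → 0 < (B x (ν x)).re)
    -- K is a Krein space: it is complete for the η-norm
    (hηcomplete : ∀ f : ℕ → K,
      (∀ ε : ℝ, 0 < ε → ∃ M : ℕ, ∀ m ≥ M, ∀ n ≥ M,
        Real.sqrt (B (f m - f n) (η (f m - f n))).re < ε) →
      ∃ x : K, ∀ ε : ℝ, 0 < ε → ∃ M : ℕ, ∀ n ≥ M,
        Real.sqrt (B (f n - x) (η (f n - x))).re < ε) :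
    ∃ (U : K →ₗ[ℂ] K) (c C : ℝ),
      Function.Bijective U ∧
      -- U is a Krein isometry (hence, being bijective, Krein-unitary)
      (∀ x y : K, B (U x) (U y) = B x y) ∧
      -- U is bounded with bounded inverse for the η-norm
      (∀ x : K, Real.sqrt (B (U x) (η (U x))).re ≤ c * Real.sqrt (B x (η x)).re) ∧
      (∀ x : K, Real.sqrt (B x (η x)).re ≤ C * Real.sqrt (B (U x) (η (U x))).re) ∧
      -- U is positive definite with respect to ⟨·,·⟩_η
      (∀ x : K, x ≠ 0 → 0 < (B x (η (U x))).re) ∧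
      -- ν = U^× η U, expressed as (y, ν x) = (U y, η U x) for all x, y
      (∀ x y : K, B y (ν x) = B (U y) (η (U x))) := by
  let core := innerProductCoreOfFundamentalSymmetry B hherm η hηsa hηpos
  let _ : NormedAddCommGroup K := core.toNormedAddCommGroup
  let _ : InnerProductSpace ℂ K := .ofCore core.toCore
  have _ : CompleteSpace K := completeSpace_of_norm_cauchy_tendsto hηcomplete
  have hB : ∀ x y, B x y = ⟪x, η y⟫_ℂ := fun x y => by
    change B x y = B x (η (η y))
    rw [hη2]
  obtain ⟨U, hU, hUU, hUηU⟩ := exists_isStrictlyPositive_kreinIsometry_mul_self_eq_comp η ν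
    (fun x y => hηsa x (η y)) hη2 hν2 (fun x y => by rw [← hB, ← hB, hνsa]) fun x => by
      rcases eq_or_ne x 0 with rfl | hx
      · simp
      · exact (hB x (ν x) ▸ hνpos x hx).le
  have hUsymm := hU.isSelfAdjoint.isSymmetric
  refine ⟨U, ‖U‖, ‖Ring.inverse U‖, ContinuousLinearMap.isUnit_iff_bijective.mp hU.isUnit,
    fun x y => ?_, U.le_opNorm, U.norm_le_norm_ringInverse_mul_norm_apply hU.isUnit,
    fun x hx => U.re_inner_apply_pos_of_isStrictlyPositive hU hx, fun x y => ?_⟩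
  · rw [hB, hB, ← hUηU y]
    exact hUsymm x (η (U y))
  · rw [hB y, ← hUU]
    exact (hUsymm y (U x)).symm

/-- Any two fundamental symmetries η, ν of a Krein space are related by
`ν = U^× η U` for some bounded (with bounded inverse) Krein-unitary operator `U`
that is positive definite with respect to the η-inner product. -/
theorem fundamental_symmetries_krein_unitarily_equivalent
    {K : Type*} [AddCommGroup K] [Module ℂ K]
    (B : K →ₗ⋆[ℂ] K →ₗ[ℂ] ℂ)
    (hherm : ∀ x y : K, starRingEnd ℂ (B y x) = B x y)
    (hnondeg : ∀ x : K, (∀ y : K, B x y = 0) → x = 0)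
    (η ν : K →ₗ[ℂ] K)
    (hη2 : ∀ x, η (η x) = x) (hν2 : ∀ x, ν (ν x) = x)
    (hηsa : ∀ x y : K, B (η x) y = B x (η y))
    (hνsa : ∀ x y : K, B (ν x) y = B x (ν y))
    (hηpos : ∀ x : K, x ≠ 0 → 0 < (B x (η x)).re)
    (hνpos : ∀ x : K, x ≠ 0 → 0 < (B x (ν x)).re)
    -- K is a Krein space: it is complete for the η-norm
    (hηcomplete : ∀ f : ℕ → K,
      (∀ ε : ℝ, 0 < ε → ∃ M : ℕ, ∀ m ≥ M, ∀ n ≥ M,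
        Real.sqrt (B (f m - f n) (η (f m - f n))).re < ε) →
      ∃ x : K, ∀ ε : ℝ, 0 < ε → ∃ M : ℕ, ∀ n ≥ M,
        Real.sqrt (B (f n - x) (η (f n - x))).re < ε) :
    ∃ (U : K →ₗ[ℂ] K) (c C : ℝ),
      Function.Bijective U ∧
      -- U is a Krein isometry (hence, being bijective, Krein-unitary)
      (∀ x y : K, B (U x) (U y) = B x y) ∧
      -- U is bounded with bounded inverse for the η-norm
      (∀ x : K, Real.sqrt (B (U x) (η (U x))).re ≤ c * Real.sqrt (B x (η x)).re) ∧
      (∀ x : K, Real.sqrt (B x (η x)).re ≤ C * Real.sqrt (B (U x) (η (U x))).re) ∧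
      -- U is positive definite with respect to ⟨·,·⟩_η
      (∀ x : K, x ≠ 0 → 0 < (B x (η (U x))).re) ∧
      -- ν = U^× η U, expressed as (y, ν x) = (U y, η U x) for all x, y
      (∀ x y : K, B y (ν x) = B (U y) (η (U x))) :=
  fundamental_symmetries_krein_unitarily_equivalent_general B hherm η ν hη2 hν2 hηsa hνsa hηpos
    hνpos hηcomplete
end

section
/- A real vector space V of finite dimension d equipped with a nondegenerate symmetric bilinear form g of signature (q, p) (q negative directions, p positive directions, q + p = d) admits an orthogonal complex structure C (a linear map with C² = −1 and g(Cu, Cv) = g(u,v) for all u,v) if and only if both q and p are even. -/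
/-!
If `C` is an orthogonal complex structure for a symmetric form `g`, then `(x, y) ↦ g (C x) y` is
skew-symmetric. On the span `N` of the `q` negative basis vectors its Gram matrix is therefore skew,
hence singular when `q` is odd, which yields `u ≠ 0` in `N` with `C u ⊥ N`. But `g` is positive
semidefinite on `N^⊥`, whereas `g (C u) (C u) = g u u < 0`. The same argument for `-g` shows that `p`
is even. Conversely, when `q` and `p` are even the basis vectors `b (2k)` and `b (2k + 1)` have the
same sign, and rotating each such pair by a quarter turn is an orthogonal complex structure.
-/

open Module Matrix

theorem Matrix.det_eq_zero_of_transpose_eq_neg {n R : Type*} [Fintype n] [DecidableEq n]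
    [CommRing R] [IsAddTorsionFree R] {A : Matrix n n R} (hA : Aᵀ = -A)
    (hn : Odd (Fintype.card n)) : A.det = 0 := by
  refine self_eq_neg.mp ?_
  conv_lhs => rw [← A.det_transpose, hA, det_neg, hn.neg_one_pow, neg_one_mul]

structure IsOrthogonalComplexStructure {R V : Type*} [CommRing R] [AddCommGroup V] [Module R V]
    (g : V →ₗ[R] V →ₗ[R] R) (C : V →ₗ[R] V) : Prop where
  apply_apply : ∀ v, C (C v) = -v
  isometry : ∀ u v, g (C u) (C v) = g u v

section CommRing

variable {R V ι : Type*} [CommRing R] [AddCommGroup V] [Module R V] [DecidableEq ι]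
  {g : V →ₗ[R] V →ₗ[R] R} {C : V →ₗ[R] V}

namespace IsOrthogonalComplexStructure

theorem neg (hC : IsOrthogonalComplexStructure g C) : IsOrthogonalComplexStructure (-g) C :=
  ⟨hC.apply_apply, fun u v => by simp [hC.isometry]⟩

theorem apply_apply_eq_neg_swap (hg : ∀ x y, g x y = g y x)
    (hC : IsOrthogonalComplexStructure g C) (x y : V) : g (C x) y = -g (C y) x :=
  calc g (C x) y = g (C (C x)) (C y) := (hC.isometry _ _).symm
    _ = -g (C y) x := by rw [hC.apply_apply, map_neg, LinearMap.neg_apply, hg]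

end IsOrthogonalComplexStructure

variable (b : Basis ι R V) (s : ι → R)

theorem apply_comm_of_apply_basis_eq_ite
    (hb : ∀ i j, g (b i) (b j) = if i = j then s i else 0) (x y : V) : g x y = g y x := by
  have : g.flip = g := LinearMap.ext_basis b b fun i j => by
    rw [LinearMap.flip_apply, hb, hb]
    split_ifs <;> simp_all
  exact LinearMap.congr_fun₂ this y x

theorem apply_basis_eq_repr_mul [Fintype ι]
    (hb : ∀ i j, g (b i) (b j) = if i = j then s i else 0) (w : V) (i : ι) :
    g w (b i) = b.repr w i * s i :=
  calc g w (b i) = g (∑ j, b.repr w j • b j) (b i) := by rw [b.sum_repr]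
    _ = b.repr w i * s i := by
      simp only [map_sum, map_smul, LinearMap.sum_apply, LinearMap.smul_apply, hb, smul_eq_mul,
        mul_ite, mul_zero, Finset.sum_ite_eq', Finset.mem_univ, if_true]

theorem exists_isOrthogonalComplexStructure_of_involutive
    (hb : ∀ i j, g (b i) (b j) = if i = j then s i else 0) (σ : ι → ι)
    (hσ : Function.Involutive σ) (hsσ : ∀ i, s (σ i) = s i) (ε : ι → R)
    (hεσ : ∀ i, ε (σ i) = -ε i) (hε : ∀ i, ε i * ε i = 1) :
    ∃ C, IsOrthogonalComplexStructure g C := by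
  let C := b.constr R fun i => ε i • b (σ i)
  have hCb : ∀ i, C (b i) = ε i • b (σ i) := b.constr_basis R _
  refine ⟨C, fun v => ?_, fun u v => ?_⟩
  · have : C ∘ₗ C = -LinearMap.id := b.ext fun i => by
      simp [hCb, hεσ, hσ i, smul_smul, hε]
    exact LinearMap.congr_fun this v
  · have : g.compl₁₂ C C = g := LinearMap.ext_basis b b fun i j => by
      simp only [LinearMap.compl₁₂_apply, hCb, map_smul, LinearMap.smul_apply, hb,
        hσ.injective.eq_iff, smul_eq_mul]
      split_ifs with hij
      · rw [hij, hsσ, ← mul_assoc, hε, one_mul]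
      · simp
    exact LinearMap.congr_fun₂ this u v

end CommRing

section OrderedField

variable {K V ι : Type*} [Field K] [LinearOrder K] [IsStrictOrderedRing K] [AddCommGroup V]
  [Module K V] [Fintype ι] [DecidableEq ι] {g : V →ₗ[K] V →ₗ[K] K}

theorem apply_self_nonneg_of_apply_basis_eq_ite (b : Basis ι K V) (s : ι → K)
    (hb : ∀ i j, g (b i) (b j) = if i = j then s i else 0) (w : V)
    (hw : ∀ i, 0 ≤ s i ∨ g w (b i) = 0) : 0 ≤ g w w :=
  calc 0 ≤ ∑ i, b.repr w i * g w (b i) := Finset.sum_nonneg fun i _ => by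
        rcases hw i with hs | hwi
        · rw [apply_basis_eq_repr_mul b s hb, ← mul_assoc]
          exact mul_nonneg (mul_self_nonneg _) hs
        · rw [hwi, mul_zero]
    _ = g w (∑ i, b.repr w i • b i) := by simp only [map_sum, map_smul, smul_eq_mul]
    _ = g w w := by rw [b.sum_repr]

theorem apply_self_nonpos_of_apply_basis_eq_ite (b : Basis ι K V) (s : ι → K)
    (hb : ∀ i j, g (b i) (b j) = if i = j then s i else 0) (w : V)
    (hw : ∀ i, s i ≤ 0 ∨ g w (b i) = 0) : g w w ≤ 0 := by
  have hb' : ∀ i j, (-g) (b i) (b j) = if i = j then -s i else 0 := fun i j => by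
    simp [hb, neg_ite]
  simpa using apply_self_nonneg_of_apply_basis_eq_ite b (-s) hb' w fun i => by
    simpa using hw i

namespace IsOrthogonalComplexStructure

variable {C : V →ₗ[K] V}

theorem even_card_of_neg_orthonormal (hg : ∀ x y, g x y = g y x)
    (hC : IsOrthogonalComplexStructure g C) (e : ι → V)
    (he : ∀ i j, g (e i) (e j) = if i = j then -1 else 0)
    (hperp : ∀ w, (∀ i, g w (e i) = 0) → 0 ≤ g w w) : Even (Fintype.card ι) := by
  by_contra hodd
  let A : Matrix ι ι K := Matrix.of fun i j => g (C (e i)) (e j)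
  have hA : Aᵀ = -A := by ext i j; exact hC.apply_apply_eq_neg_swap hg (e j) (e i)
  obtain ⟨c, hc0, hcA⟩ := exists_vecMul_eq_zero_iff.mpr
    (det_eq_zero_of_transpose_eq_neg hA (Nat.not_even_iff_odd.mp hodd))
  let u := ∑ i, c i • e i
  have hCu : ∀ j, g (C u) (e j) = 0 := fun j => by
    simpa [u, A, vecMul, dotProduct, mul_comm] using congrFun hcA j
  have huu : g u u = -∑ i, c i ^ 2 := by simp [u, he, map_sum, sq]
  have hc : 0 < ∑ i, c i ^ 2 := by
    obtain ⟨i, hi⟩ := Function.ne_iff.mp hc0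
    exact Finset.sum_pos' (fun i _ => sq_nonneg _) ⟨i, Finset.mem_univ i, sq_pos_of_ne_zero hi⟩
  have := hperp (C u) hCu
  rw [hC.isometry] at this
  linarith

theorem even_card_of_orthonormal (hg : ∀ x y, g x y = g y x)
    (hC : IsOrthogonalComplexStructure g C) (e : ι → V)
    (he : ∀ i j, g (e i) (e j) = if i = j then 1 else 0)
    (hperp : ∀ w, (∀ i, g w (e i) = 0) → g w w ≤ 0) : Even (Fintype.card ι) :=
  hC.neg.even_card_of_neg_orthonormal (fun x y => by simp [hg x y]) e
    (fun i j => by simp [he, neg_ite]) fun w hw => by simpa using hperp w (by simpa using hw)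

end IsOrthogonalComplexStructure

end OrderedField

def pairSwap (k : ℕ) : ℕ := if k % 2 = 0 then k + 1 else k - 1

theorem pairSwap_pairSwap (k : ℕ) : pairSwap (pairSwap k) = k := by
  unfold pairSwap; split_ifs <;> omega

theorem pairSwap_lt_iff {n k : ℕ} (hn : Even n) : pairSwap k < n ↔ k < n := by
  rw [Nat.even_iff] at hn; unfold pairSwap; split_ifs <;> omega

theorem neg_one_pow_pairSwap {R : Type*} [Monoid R] [HasDistribNeg R] (k : ℕ) :
    (-1 : R) ^ pairSwap k = -(-1) ^ k := by
  unfold pairSwap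
  split_ifs with h
  · rw [pow_succ, mul_neg_one]
  · obtain ⟨m, rfl⟩ : ∃ m, k = m + 1 := ⟨k - 1, by omega⟩
    rw [Nat.add_sub_cancel, pow_succ, mul_neg_one, neg_neg]

/-- A real vector space with a nondegenerate symmetric bilinear form of signature
`(q, p)` admits an orthogonal complex structure iff both `q` and `p` are even. -/
theorem orthogonal_complex_structure_iff_even_even
    {V : Type*} [AddCommGroup V] [Module ℝ V] (q p : ℕ)
    (g : V →ₗ[ℝ] V →ₗ[ℝ] ℝ)
    -- g has signature (q, p): there is a pseudo-orthonormal basis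
    (b : Module.Basis (Fin (q + p)) ℝ V)
    (hb : ∀ i j, g (b i) (b j) =
      if i = j then (if (i : ℕ) < q then (-1 : ℝ) else 1) else 0) :
    (∃ C : V →ₗ[ℝ] V, (∀ v, C (C v) = -v) ∧ ∀ u v, g (C u) (C v) = g u v)
      ↔ (Even q ∧ Even p) := by
  have hg := apply_comm_of_apply_basis_eq_ite b _ hb
  constructor
  · rintro ⟨C, hC2, hCg⟩
    have hC : IsOrthogonalComplexStructure g C := ⟨hC2, hCg⟩
    constructor
    · simpa using hC.even_card_of_neg_orthonormal hg (fun i : Fin q => b (Fin.castAdd p i))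
        (fun i j => by simp [hb]) fun w hw => apply_self_nonneg_of_apply_basis_eq_ite b _ hb w
          (Fin.addCases (fun i => Or.inr (hw i)) fun i => Or.inl (by simp))
    · simpa using hC.even_card_of_orthonormal hg (fun i : Fin p => b (Fin.natAdd q i))
        (fun i j => by simp [hb]) fun w hw => apply_self_nonpos_of_apply_basis_eq_ite b _ hb w
          (Fin.addCases (fun i => Or.inl (by simp)) fun i => Or.inr (hw i))
  · rintro ⟨hq, hp⟩
    obtain ⟨C, hC⟩ := exists_isOrthogonalComplexStructure_of_involutive b _ hb
      (fun i => ⟨pairSwap i, (pairSwap_lt_iff (hq.add hp)).2 i.2⟩)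
      (fun i => Fin.ext (pairSwap_pairSwap i)) (fun i => by simp only [pairSwap_lt_iff hq])
      (fun i => (-1 : ℝ) ^ (i : ℕ)) (fun i => neg_one_pow_pairSwap (i : ℕ))
      (fun i => by rw [← mul_pow, neg_one_mul, neg_neg, one_pow])
    exact ⟨C, hC.apply_apply, hC.isometry⟩
end
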